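/- Let a, b, c, d, f, g ∈ ℂ all with positive real parts, and suppose the series rearrangement identities hold. Then the continuous dual Hahn polynomials satisfy the connection relation S_n(x²; a,b,c) = Σ_{k=0}^n C(n,k) (k+a+b)_{n−k}(k+a+c)_{n−k} · ₃F₂(k−n, k+a+f, k+a+g; k+a+b, k+a+c; 1) · S_k(x²; a,f,g), for all x ∈ (0,∞) and n ∈ ℕ₀. -/

import Mathlib

open Complex Finset

/-- The Pochhammer symbol (rising factorial) `(z)_n = z(z+1)⋯(z+n-1)`. -/
noncomputable def poch (z : ℂ) (n : ℕ) : ℂ := ∏ i ∈ Finset.range n, (z + i)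

/-- The continuous dual Hahn polynomial `S_n(x²; a, b, c)`, via its terminating
`₃F₂(-n, a+ix, a-ix; a+b, a+c; 1)` representation. -/
noncomputable def cdHahn (n : ℕ) (x : ℝ) (a b c : ℂ) : ℂ :=
  poch (a + b) n * poch (a + c) n *
    ∑ j ∈ Finset.range (n + 1),
      poch (-(n : ℂ)) j * poch (a + Complex.I * x) j * poch (a - Complex.I * x) j /
        (poch (a + b) j * poch (a + c) j * j.factorial)

/-! In the basis `(a + ix)ⱼ (a - ix)ⱼ`, the `j`-th coefficient of `S_n(x²; a, b, c)` is
`(-1)ʲ C(n, j) (j + a + b)_{n-j} (j + a + c)_{n-j}`. Writing `m = k + s` on the right-hand side,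
`C(n, k) C(n - k, m - k) = C(n, m) C(m, k)` and `(j + φ)_{k-j} (k + φ)_{m-k} = (j + φ)_{m-j}`
leave the inner sum `∑ₖ (-1)^(m-k) C(m, k) C(k, j) = δ_{mj}`, i.e. binomial inversion. -/

lemma poch_add (z : ℂ) (m s : ℕ) : poch z (m + s) = poch z m * poch (z + m) s := by
  simp only [poch, prod_range_add, Nat.cast_add, add_assoc]

lemma poch_ne_zero {z : ℂ} (hz : 0 < z.re) (n : ℕ) : poch z n ≠ 0 := by
  refine prod_ne_zero_iff.mpr fun i _ h => ?_
  have := congrArg re h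
  simp only [add_re, natCast_re, zero_re] at this
  linarith [i.cast_nonneg (α := ℝ)]

lemma poch_neg_natCast (n j : ℕ) : poch (-n) j = (-1) ^ j * j.factorial * n.choose j := by
  have h : ∀ i ∈ range j, -(n : ℂ) + i = -1 * (n - i) := fun _ _ => by ring
  rw [poch, prod_congr rfl h, prod_mul_distrib, prod_const, card_range,
    ← descPochhammer_eval_eq_prod_range, descPochhammer_eval_eq_descFactorial,
    Nat.descFactorial_eq_factorial_mul_choose]
  push_cast
  ring

lemma sum_neg_one_pow_mul_choose_mul_choose {R : Type*} [CommRing R] (m j : ℕ) :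
    ∑ k ∈ range (m + 1), ((-1) ^ (m - k) * m.choose k * k.choose j : R) =
      if m = j then 1 else 0 := by
  rcases lt_or_ge m j with h | h
  · rw [if_neg h.ne]
    refine sum_eq_zero fun k hk => ?_
    rw [Nat.choose_eq_zero_of_lt (show k < j by rw [mem_range] at hk; omega)]
    simp
  obtain ⟨t, rfl⟩ := exists_add_of_le h
  have hterm : ∀ i ∈ range (t + 1), ((-1) ^ (j + t - (j + i)) * (j + t).choose (j + i) *
      (j + i).choose j : R) = (j + t).choose j * (1 ^ i * (-1) ^ (t - i) * t.choose i) := by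
    intro i _
    have := Nat.choose_mul (n := j + t) (k := j + i) (s := j) (by omega)
    simp only [Nat.add_sub_cancel_left] at this
    rw [show j + t - (j + i) = t - i by omega, one_pow, one_mul, mul_assoc,
      ← Nat.cast_mul, this]
    push_cast
    ring
  rw [show j + t + 1 = j + (t + 1) by ring, sum_range_add,
    sum_eq_zero fun k hk => by rw [Nat.choose_eq_zero_of_lt (show k < j by simpa using hk)]; simp,
    zero_add, sum_congr rfl hterm, ← mul_sum, ← add_pow, add_neg_cancel]
  rcases t with _ | t <;> simp

/-- `(z)ₙ / (z)ⱼ` for `j ≤ n`, written without division. -/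
noncomputable def pochRatio (z : ℂ) (j n : ℕ) : ℂ := poch (j + z) (n - j)

lemma pochRatio_self (z : ℂ) (n : ℕ) : pochRatio z n n = 1 := by
  simp [pochRatio, poch]

lemma pochRatio_eq_div {z : ℂ} {j n : ℕ} (hz : poch z j ≠ 0) (h : j ≤ n) :
    pochRatio z j n = poch z n / poch z j := by
  rw [eq_div_iff hz, pochRatio, mul_comm, add_comm, ← poch_add, Nat.add_sub_cancel' h]

lemma pochRatio_mul_pochRatio (z : ℂ) {j k m : ℕ} (hjk : j ≤ k) (hkm : k ≤ m) :
    pochRatio z j k * pochRatio z k m = pochRatio z j m := by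
  obtain ⟨s, rfl⟩ := exists_add_of_le hjk
  obtain ⟨t, rfl⟩ := exists_add_of_le hkm
  rw [pochRatio, pochRatio, pochRatio, show j + s + t - (j + s) = t by omega,
    Nat.add_sub_cancel_left, add_assoc, Nat.add_sub_cancel_left, poch_add]
  push_cast
  ring_nf

lemma choose_mul_pochRatio_mul_pochRatio (z : ℂ) {j k m : ℕ} (hkm : k ≤ m) :
    (k.choose j : ℂ) * (pochRatio z j k * pochRatio z k m) = k.choose j * pochRatio z j m := by
  rcases le_or_gt j k with h | h
  · rw [pochRatio_mul_pochRatio z h hkm]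
  · simp [Nat.choose_eq_zero_of_lt h]

/-- The coefficient of `(a + ix)ⱼ (a - ix)ⱼ` in `S_n(x²; a, b, c)`, where `β = a + b`,
`γ = a + c`. -/
noncomputable def cdHahnCoeff (n j : ℕ) (β γ : ℂ) : ℂ :=
  (-1) ^ j * n.choose j * pochRatio β j n * pochRatio γ j n

lemma cdHahnCoeff_of_lt {n j : ℕ} (h : n < j) (β γ : ℂ) : cdHahnCoeff n j β γ = 0 := by
  simp [cdHahnCoeff, Nat.choose_eq_zero_of_lt h]

lemma cdHahn_eq_sum {a b c : ℂ} (hb : 0 < (a + b).re) (hc : 0 < (a + c).re) (x : ℝ)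
    {n N : ℕ} (h : n ≤ N) :
    cdHahn n x a b c = ∑ j ∈ range (N + 1),
      cdHahnCoeff n j (a + b) (a + c) * (poch (a + I * x) j * poch (a - I * x) j) := by
  rw [← sum_subset (range_subset_range.mpr (by omega : n + 1 ≤ N + 1))
    fun j _ hj => by rw [cdHahnCoeff_of_lt (by simpa using hj), zero_mul], cdHahn, mul_sum]
  refine sum_congr rfl fun j hj => ?_
  have hjn : j ≤ n := Nat.lt_succ_iff.mp (mem_range.mp hj)
  have hbj := poch_ne_zero hb j
  have hcj := poch_ne_zero hc j
  have hfac : (j.factorial : ℂ) ≠ 0 := Nat.cast_ne_zero.mpr j.factorial_ne_zero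
  rw [cdHahnCoeff, pochRatio_eq_div hbj hjn, pochRatio_eq_div hcj hjn, poch_neg_natCast]
  field_simp

/-- The connection coefficient of `S_n(x²; a, b, c)` on `S_k(x²; a, f, g)`, where
`β, γ, φ, ψ = a + b, a + c, a + f, a + g`; the `₃F₂` is summed over `m = k + s`. -/
noncomputable def cdHahnConnCoeff (n k : ℕ) (β γ φ ψ : ℂ) : ℂ :=
  ∑ m ∈ Ico k (n + 1), (-1) ^ (m - k) * n.choose m * m.choose k *
    pochRatio β m n * pochRatio γ m n * pochRatio φ k m * pochRatio ψ k m

lemma cdHahnConnCoeff_eq {β γ : ℂ} (hβ : 0 < β.re) (hγ : 0 < γ.re) (φ ψ : ℂ) {n k : ℕ}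
    (hk : k ≤ n) :
    (n.choose k : ℂ) * poch (k + β) (n - k) * poch (k + γ) (n - k) *
      ∑ s ∈ range (n - k + 1), poch ((k : ℂ) - n) s * poch (k + φ) s * poch (k + ψ) s /
        (poch (k + β) s * poch (k + γ) s * s.factorial) =
    cdHahnConnCoeff n k β γ φ ψ := by
  rw [cdHahnConnCoeff, sum_Ico_eq_sum_range, mul_sum, show n + 1 - k = n - k + 1 by omega]
  refine sum_congr rfl fun s hs => ?_
  have hs : s ≤ n - k := Nat.lt_succ_iff.mp (mem_range.mp hs)
  have split : ∀ z : ℂ, poch (k + z) (n - k) = poch (k + z) s * pochRatio z (k + s) n :=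
    fun z => by
      rw [pochRatio, show n - k = s + (n - (k + s)) by omega, poch_add]
      push_cast
      ring_nf
  have hchoose : (n.choose k * (n - k).choose s : ℂ) = n.choose (k + s) * (k + s).choose k := by
    have := Nat.choose_mul (n := n) (k := k + s) (s := k) (by omega)
    rw [Nat.add_sub_cancel_left] at this
    exact_mod_cast this.symm
  have hpos : ∀ {z : ℂ}, 0 < z.re → 0 < ((k : ℂ) + z).re := fun hz => by
    rw [add_re, natCast_re]
    linarith [k.cast_nonneg (α := ℝ)]
  have hβs := poch_ne_zero (hpos hβ) s
  have hγs := poch_ne_zero (hpos hγ) s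
  have hfac : (s.factorial : ℂ) ≠ 0 := Nat.cast_ne_zero.mpr s.factorial_ne_zero
  rw [show (k : ℂ) - n = -((n - k : ℕ) : ℂ) by push_cast [hk]; ring, poch_neg_natCast,
    split, split]
  simp only [pochRatio, Nat.add_sub_cancel_left]
  field_simp
  linear_combination poch ((k + s : ℕ) + β) (n - (k + s)) * poch ((k + s : ℕ) + γ) (n - (k + s)) *
    poch (k + φ) s * poch (k + ψ) s * hchoose

lemma sum_cdHahnConnCoeff_mul_cdHahnCoeff (β γ φ ψ : ℂ) (n j : ℕ) :
    ∑ k ∈ range (n + 1), cdHahnConnCoeff n k β γ φ ψ * cdHahnCoeff k j φ ψ =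
      cdHahnCoeff n j β γ := by
  have hterm : ∀ m ∈ range (n + 1), ∀ k ∈ range (m + 1),
      (-1) ^ (m - k) * n.choose m * m.choose k * pochRatio β m n * pochRatio γ m n *
          pochRatio φ k m * pochRatio ψ k m * cdHahnCoeff k j φ ψ =
        n.choose m * pochRatio β m n * pochRatio γ m n *
          ((-1) ^ j * pochRatio φ j m * pochRatio ψ j m) *
          ((-1) ^ (m - k) * m.choose k * k.choose j) := by
    intro m _ k hk
    have hkm : k ≤ m := Nat.lt_succ_iff.mp (mem_range.mp hk)
    have hφ := choose_mul_pochRatio_mul_pochRatio φ (j := j) hkm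
    have hψ := choose_mul_pochRatio_mul_pochRatio ψ (j := j) hkm
    rw [cdHahnCoeff]
    linear_combination ((-1) ^ (m - k) * n.choose m * m.choose k * pochRatio β m n *
      pochRatio γ m n * (-1) ^ j) *
      (pochRatio ψ j k * pochRatio ψ k m * hφ + pochRatio φ j m * hψ)
  calc ∑ k ∈ range (n + 1), cdHahnConnCoeff n k β γ φ ψ * cdHahnCoeff k j φ ψ
      = ∑ m ∈ range (n + 1), ∑ k ∈ range (m + 1),
          (-1) ^ (m - k) * n.choose m * m.choose k * pochRatio β m n * pochRatio γ m n *
            pochRatio φ k m * pochRatio ψ k m * cdHahnCoeff k j φ ψ := by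
        simp only [cdHahnConnCoeff, sum_mul, range_eq_Ico]
        exact sum_Ico_Ico_comm 0 (n + 1) _
    _ = ∑ m ∈ range (n + 1), n.choose m * pochRatio β m n * pochRatio γ m n *
          ((-1) ^ j * pochRatio φ j m * pochRatio ψ j m) * if m = j then 1 else 0 := by
        refine sum_congr rfl fun m hm => ?_
        rw [sum_congr rfl (hterm m hm), ← mul_sum, sum_neg_one_pow_mul_choose_mul_choose]
    _ = cdHahnCoeff n j β γ := by
        simp only [mul_ite, mul_one, mul_zero, sum_ite_eq', mem_range]
        split_ifs with hj
        · rw [cdHahnCoeff, pochRatio_self, pochRatio_self]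
          ring
        · rw [cdHahnCoeff_of_lt (by omega)]

theorem cdHahn_connection_two_free_general (a b c f g : ℂ)
    (ha : 0 < a.re) (hb : 0 < b.re) (hc : 0 < c.re)
    (hf : 0 < f.re) (hg : 0 < g.re) (x : ℝ) (n : ℕ) :
    cdHahn n x a b c =
      ∑ k ∈ Finset.range (n + 1),
        (n.choose k : ℂ) * poch ((k : ℂ) + a + b) (n - k) * poch ((k : ℂ) + a + c) (n - k) *
          (∑ s ∈ Finset.range (n - k + 1),
            poch ((k : ℂ) - n) s * poch ((k : ℂ) + a + f) s * poch ((k : ℂ) + a + g) s /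
              (poch ((k : ℂ) + a + b) s * poch ((k : ℂ) + a + c) s * s.factorial)) *
          cdHahn k x a f g := by
  have pos : ∀ {z : ℂ}, 0 < z.re → 0 < (a + z).re := fun hz => by rw [add_re]; linarith
  rw [cdHahn_eq_sum (pos hb) (pos hc) x le_rfl]
  calc _ = ∑ j ∈ range (n + 1), (∑ k ∈ range (n + 1),
          cdHahnConnCoeff n k (a + b) (a + c) (a + f) (a + g) * cdHahnCoeff k j (a + f) (a + g)) *
            (poch (a + I * x) j * poch (a - I * x) j) := by
        simp only [sum_cdHahnConnCoeff_mul_cdHahnCoeff]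
    _ = ∑ k ∈ range (n + 1), cdHahnConnCoeff n k (a + b) (a + c) (a + f) (a + g) *
          ∑ j ∈ range (n + 1), cdHahnCoeff k j (a + f) (a + g) *
            (poch (a + I * x) j * poch (a - I * x) j) := by
        simp only [sum_mul, mul_sum, mul_assoc]
        exact sum_comm
    _ = _ := sum_congr rfl fun k hk => by
        have hkn : k ≤ n := Nat.lt_succ_iff.mp (mem_range.mp hk)
        rw [← cdHahnConnCoeff_eq (pos hb) (pos hc) _ _ hkn, cdHahn_eq_sum (pos hf) (pos hg) x hkn]
        simp only [add_assoc]

theorem cdHahn_connection_two_free (a b c d f g : ℂ)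
    (ha : 0 < a.re) (hb : 0 < b.re) (hc : 0 < c.re) (hd : 0 < d.re)
    (hf : 0 < f.re) (hg : 0 < g.re) (x : ℝ) (hx : 0 < x) (n : ℕ) :
    cdHahn n x a b c =
      ∑ k ∈ Finset.range (n + 1),
        (n.choose k : ℂ) * poch ((k : ℂ) + a + b) (n - k) * poch ((k : ℂ) + a + c) (n - k) *
          (∑ s ∈ Finset.range (n - k + 1),
            poch ((k : ℂ) - n) s * poch ((k : ℂ) + a + f) s * poch ((k : ℂ) + a + g) s /
              (poch ((k : ℂ) + a + b) s * poch ((k : ℂ) + a + c) s * s.factorial)) *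
          cdHahn k x a f g :=
  cdHahn_connection_two_free_general a b c f g ha hb hc hf hg x n
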